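/- arXiv:2401.17962 — 2 statements merged into one kernel-verified Lean document; each statement's English description precedes it below -/
import Mathlib

section
/- Let P and Q be disjoint sets of primes, G a group in which every element is a product of elements each of which is either of finite order or p-divisible in G for some p ∈ P, and H any group. If φ : G → Δ[Q] × H is an injective group homomorphism, then the image of φ is contained in {0} × H; in particular, G embeds into H. -/
/-!
The first coordinate of `φ` is a homomorphism `G → Δ[Q]`. It kills elements of finite order since
`Δ[Q] ⊆ ℚ` is torsion-free. For `p ∉ Q` every element of `Δ[Q]` has `p`-adic norm at most `1`,
so a `p`-divisible element has `p`-adic norm at most `p⁻ⁿ` for all `n` and hence is `0`.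
As such elements generate `G`, the first coordinate is trivial and the second one is injective.
-/

/-- `Δ[P]`: the additive subgroup of `ℚ` generated by the rationals of the form
`m / (p₁ ⋯ pₙ)` with `m ∈ ℤ` and `p₁, …, pₙ ∈ P`. -/
def Delta (P : Set ℕ) : AddSubgroup ℚ :=
  AddSubgroup.closure
    {x : ℚ | ∃ (m : ℤ) (l : List ℕ), (∀ p ∈ l, p ∈ P) ∧ x = (m : ℚ) / (l.prod : ℕ)}

def IsPDivisible {M : Type*} [Monoid M] (p : ℕ) (a : M) : Prop :=
  ∀ n : ℕ, ∃ x : M, x ^ p ^ n = a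

theorem IsPDivisible.map {M N F : Type*} [Monoid M] [Monoid N] [FunLike F M N]
    [MonoidHomClass F M N] (f : F) {p : ℕ} {a : M} (ha : IsPDivisible p a) :
    IsPDivisible p (f a) := fun n ↦
  let ⟨x, hx⟩ := ha n
  ⟨f x, by rw [← map_pow, hx]⟩

theorem MonoidHom.apply_eq_one_of_forall_isOfFinOrder_or_isPDivisible {G A : Type*} [Group G]
    [Monoid A] [IsMulTorsionFree A] {P : Set ℕ}
    (hA : ∀ p ∈ P, ∀ a : A, IsPDivisible p a → a = 1)
    (hG : ∀ a : G, ∃ l : List G, a = l.prod ∧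
      ∀ b ∈ l, IsOfFinOrder b ∨ ∃ p ∈ P, IsPDivisible p b)
    (f : G →* A) (g : G) : f g = 1 := by
  obtain ⟨l, rfl, hl⟩ := hG g
  rw [map_list_prod]
  refine List.prod_eq_one fun y hy ↦ ?_
  obtain ⟨b, hb, rfl⟩ := List.mem_map.mp hy
  rcases hl b hb with hfin | ⟨p, hp, hdiv⟩
  · exact (f.isOfFinOrder hfin).eq_one'
  · exact hA p hp _ (hdiv.map f)

theorem MonoidHom.injective_snd_comp {G A H : Type*} [Group G] [Monoid A] [Monoid H]
    {φ : G →* A × H} (hφ : Function.Injective φ) (hfst : ∀ g, (φ g).1 = 1) :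
    Function.Injective ((MonoidHom.snd A H).comp φ) :=
  fun a b h ↦ hφ (Prod.ext (by rw [hfst a, hfst b]) h)

section padic

variable {p : ℕ} [Fact p.Prime]

theorem padicNorm_le_one_of_mem_delta {Q : Set ℕ} (hQ : ∀ q ∈ Q, ¬ p ∣ q) {x : ℚ}
    (hx : x ∈ Delta Q) : padicNorm p x ≤ 1 := by
  induction hx using AddSubgroup.closure_induction with
  | mem y hy =>
    obtain ⟨m, l, hl, rfl⟩ := hy
    have hden : padicNorm p (l.prod : ℕ) = 1 := by
      rw [padicNorm.nat_eq_one_iff, (Fact.out : p.Prime).prime.dvd_prod_iff]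
      rintro ⟨q, hq, hpq⟩
      exact hQ q (hl q hq) hpq
    rw [padicNorm.div, hden, div_one]
    exact padicNorm.of_int m
  | zero => simp
  | add y z _ _ hy hz => exact padicNorm.nonarchimedean.trans (max_le hy hz)
  | neg y _ hy => rwa [padicNorm.neg]

theorem Rat.eq_zero_of_forall_padicNorm_le {x : ℚ}
    (h : ∀ n : ℕ, padicNorm p x ≤ ((p : ℚ) ^ n)⁻¹) : x = 0 := by
  by_contra hx
  have hp : (1 : ℚ) < p := by exact_mod_cast (Fact.out : p.Prime).one_lt
  have := h ((padicValRat p x).toNat + 1)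
  rw [padicNorm.eq_zpow_of_nonzero (p := p) hx, ← zpow_natCast, ← zpow_neg,
    zpow_le_zpow_iff_right₀ hp] at this
  omega

theorem Delta.eq_one_of_isPDivisible {Q : Set ℕ} (hQ : ∀ q ∈ Q, ¬ p ∣ q)
    {a : Multiplicative (Delta Q)} (ha : IsPDivisible p a) : a = 1 := by
  suffices ((a.toAdd : Delta Q) : ℚ) = 0 from congrArg Multiplicative.ofAdd (Subtype.ext this)
  refine Rat.eq_zero_of_forall_padicNorm_le (p := p) fun n ↦ ?_
  obtain ⟨x, rfl⟩ := ha n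
  have hx := padicNorm_le_one_of_mem_delta hQ x.toAdd.2
  have hpn : padicNorm p ((p : ℚ) ^ n) = ((p : ℚ) ^ n)⁻¹ := by
    rw [IsAbsoluteValue.abv_pow (padicNorm p), padicNorm.padicNorm_p_of_prime, inv_pow]
  calc padicNorm p (((x ^ p ^ n).toAdd : Delta Q) : ℚ)
      = padicNorm p ((p : ℚ) ^ n) * padicNorm p (x.toAdd : ℚ) := by
        rw [toAdd_pow, AddSubgroup.coe_nsmul, nsmul_eq_mul, Nat.cast_pow, padicNorm.mul]
    _ ≤ ((p : ℚ) ^ n)⁻¹ := by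
        rw [hpn]
        exact mul_le_of_le_one_right (by positivity) hx

end padic

/-- if `P, Q` are disjoint sets of primes, every element of `G` is a product
of elements which are of finite order or `p`-divisible for some `p ∈ P`, and
`φ : G → Δ[Q] × H` is an injective homomorphism, then the image of `φ` lies in `{0} × H`;
in particular `G` embeds into `H`. -/
theorem stmt_10 (P Q : Set ℕ) (hP : ∀ p ∈ P, p.Prime) (hQ : ∀ p ∈ Q, p.Prime)
    (hdisj : Disjoint P Q)
    (G : Type*) [Group G] (H : Type*) [Group H]
    (hG : ∀ a : G, ∃ l : List G, a = l.prod ∧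
      ∀ b ∈ l, IsOfFinOrder b ∨ ∃ p ∈ P, ∀ n : ℕ, ∃ x : G, x ^ p ^ n = b)
    (φ : G →* Multiplicative (Delta Q) × H) (hφ : Function.Injective φ) :
    (∀ g : G, (φ g).1 = 1) ∧ ∃ ψ : G →* H, Function.Injective ψ := by
  have hpQ : ∀ p ∈ P, ∀ q ∈ Q, ¬ p ∣ q := fun p hp q hq hpq ↦
    hdisj.ne_of_mem hp hq ((Nat.prime_dvd_prime_iff_eq (hP p hp) (hQ q hq)).mp hpq)
  have hfst : ∀ g : G, (φ g).1 = 1 :=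
    (MonoidHom.fst _ H |>.comp φ).apply_eq_one_of_forall_isOfFinOrder_or_isPDivisible
      (fun p hp _ ↦ have := Fact.mk (hP p hp); Delta.eq_one_of_isPDivisible (hpQ p hp)) hG
  exact ⟨hfst, _, MonoidHom.injective_snd_comp hφ hfst⟩
end

section
/- Let (G_i) be a nonempty family of groups and p a prime. If an element a of the free product ∏* G_i is p-divisible in the free product, then a is conjugate to an element b of some factor G_i such that b is p-divisible in G_i. -/
/-!
Let `ℓ` be the length of reduced words in the free product. An element of minimal length in its
conjugacy class is trivial, a single letter, or a reduced word `W` whose first and last letters lie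
in different factors, and then `ℓ (W ^ k) = k * ℓ W ≥ k`. Hence if `x ^ e = a` with `e > ℓ a`, then
`x` is conjugate into a factor: otherwise `x = c * W * c⁻¹` and
`e * N ≤ ℓ (W ^ (e * N)) ≤ ℓ c + ℓ c⁻¹ + N * ℓ a`, which fails for `N = ℓ c + ℓ c⁻¹ + 1`.
Choosing `p ^ n₀ > ℓ a`, every root `x` of `x ^ p ^ (n₀ + n) = a` is conjugate into a factor, so `a`
is conjugate to `of ((g ^ p ^ n₀) ^ p ^ n)` for each `n`. Projecting onto the factor of
`b = g ^ p ^ n₀` found for `n = 0` shows that `b` is conjugate to, hence itself, a `p ^ n`-th power.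
-/

theorem IsConj.exists_pow_eq {α : Type*} [Group α] {c b : α} {k : ℕ} (h : IsConj (c ^ k) b) :
    ∃ d, d ^ k = b := by
  obtain ⟨w, hw⟩ := isConj_iff.mp h
  exact ⟨w * c * w⁻¹, by rw [conj_pow, hw]⟩

namespace Monoid.CoprodI

variable {ι : Type*} {G : ι → Type*} [∀ i, Group (G i)]

theorem NeWord.exists_prod_pow {i j : ι} (hij : i ≠ j) (W : NeWord G i j) (k : ℕ) :
    ∃ V : NeWord G i j, V.prod = W.prod ^ (k + 1) ∧
      V.toList.length = (k + 1) * W.toList.length := by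
  induction k with
  | zero => exact ⟨W, by simp, by simp⟩
  | succ k ih =>
    obtain ⟨V, hV, hlen⟩ := ih
    refine ⟨NeWord.append W hij.symm V, by rw [NeWord.append_prod, hV, ← pow_succ'], ?_⟩
    simp only [NeWord.toList, List.length_append, hlen]
    ring

section WordLength

variable [∀ i, DecidableEq (G i)]

theorem Word.length_rcons_le {i : ι} (p : Word.Pair G i) :
    (Word.rcons p).toList.length ≤ p.tail.toList.length + 1 := by
  unfold Word.rcons
  split <;> simp

theorem Word.length_tail_le_rcons {i : ι} (p : Word.Pair G i) :
    p.tail.toList.length ≤ (Word.rcons p).toList.length := by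
  unfold Word.rcons
  split <;> simp

variable [DecidableEq ι]

def wordLength (x : CoprodI G) : ℕ := (Word.equiv x).toList.length

theorem wordLength_prod (w : Word G) : wordLength w.prod = w.toList.length :=
  congrArg (fun w => w.toList.length) (Word.equiv.apply_symm_apply w)

theorem wordLength_one : wordLength (1 : CoprodI G) = 0 := by
  rw [← Word.prod_empty, wordLength_prod]
  rfl

theorem wordLength_of_mul_le {i : ι} (m : G i) (x : CoprodI G) :
    wordLength (of m * x) ≤ wordLength x + 1 := by
  obtain ⟨w, rfl⟩ := Word.equiv.symm.surjective x
  have hw : Word.rcons (Word.equivPair i w) = w := (Word.equivPair i).symm_apply_apply w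
  change wordLength (of m * w.prod) ≤ wordLength w.prod + 1
  rw [← Word.prod_smul, wordLength_prod, wordLength_prod, Word.of_smul_def]
  have htail := Word.length_tail_le_rcons (Word.equivPair i w)
  rw [hw] at htail
  exact (Word.length_rcons_le _).trans (Nat.succ_le_succ htail)

theorem wordLength_of_le {i : ι} (m : G i) : wordLength (of m) ≤ 1 := by
  simpa [wordLength_one] using wordLength_of_mul_le m 1

theorem wordLength_mul_le (x y : CoprodI G) :
    wordLength (x * y) ≤ wordLength x + wordLength y := by
  obtain ⟨w, rfl⟩ := Word.equiv.symm.surjective x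
  change wordLength (w.prod * y) ≤ wordLength w.prod + _
  rw [wordLength_prod]
  induction w using Word.consRecOn with
  | empty => simp [Word.prod_empty]
  | cons i m w hw hm ih =>
    rw [Word.prod_cons, mul_assoc]
    grw [wordLength_of_mul_le, ih]
    simp only [Word.cons_toList, List.length_cons]
    omega

theorem wordLength_pow_le (x : CoprodI G) (n : ℕ) : wordLength (x ^ n) ≤ n * wordLength x := by
  induction n with
  | zero => simp [wordLength_one]
  | succ n ih =>
    grw [pow_succ, wordLength_mul_le, ih, Nat.succ_mul]

namespace NeWord

theorem wordLength_prod {i j : ι} (W : NeWord G i j) : wordLength W.prod = W.toList.length :=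
  CoprodI.wordLength_prod W.toWord

theorem exists_prod_eq_of_mul {i j : ι} (W : NeWord G i j) :
    ∃ (g : G i) (z : CoprodI G), W.prod = of g * z ∧ wordLength z < W.toList.length := by
  induction W with
  | singleton g _ => exact ⟨g, 1, by simp [prod_singleton], by simp [wordLength_one]⟩
  | append w₁ _ w₂ ih₁ _ =>
    obtain ⟨g, z, hz, hlen⟩ := ih₁
    refine ⟨g, z * w₂.prod, by rw [append_prod, hz, mul_assoc], ?_⟩
    grw [wordLength_mul_le, NeWord.wordLength_prod, hlen]
    simp

theorem exists_prod_eq_mul_of {i j : ι} (W : NeWord G i j) :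
    ∃ (z : CoprodI G) (g : G j), W.prod = z * of g ∧ wordLength z < W.toList.length := by
  induction W with
  | singleton g _ => exact ⟨1, g, by simp [prod_singleton], by simp [wordLength_one]⟩
  | append w₁ _ w₂ _ ih₂ =>
    obtain ⟨z, g, hz, hlen⟩ := ih₂
    refine ⟨w₁.prod * z, g, by rw [append_prod, hz, mul_assoc], ?_⟩
    grw [wordLength_mul_le, NeWord.wordLength_prod, hlen]
    simp

theorem le_wordLength_prod_pow {i j : ι} (hij : i ≠ j) (W : NeWord G i j) (k : ℕ) :
    k ≤ wordLength (W.prod ^ k) := by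
  cases k with
  | zero => exact Nat.zero_le _
  | succ k =>
    obtain ⟨V, hV, hlen⟩ := exists_prod_pow hij W k
    rw [← hV, NeWord.wordLength_prod, hlen]
    exact Nat.le_mul_of_pos_right _ (List.length_pos_iff.mpr W.toList_ne_nil)

theorem wordLength_prod_mul_prod_lt {i k l : ι} (w₁ : NeWord G i k) (w₂ : NeWord G l i) :
    wordLength (w₂.prod * w₁.prod) < w₁.toList.length + w₂.toList.length := by
  obtain ⟨g, z₁, hz₁, hlen₁⟩ := w₁.exists_prod_eq_of_mul
  obtain ⟨z₂, h, hz₂, hlen₂⟩ := w₂.exists_prod_eq_mul_of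
  have hprod : w₂.prod * w₁.prod = z₂ * of (h * g) * z₁ := by
    rw [hz₁, hz₂, map_mul]
    group
  rw [hprod]
  grw [wordLength_mul_le, wordLength_mul_le, wordLength_of_le]
  omega

end NeWord

theorem exists_isConj_forall_wordLength_le (x : CoprodI G) :
    ∃ y, IsConj x y ∧ ∀ z, IsConj y z → wordLength y ≤ wordLength z := by
  classical
  have hex : ∃ n, ∃ y, IsConj x y ∧ wordLength y = n := ⟨_, x, IsConj.refl x, rfl⟩
  obtain ⟨y, hxy, hy⟩ := Nat.find_spec hex
  exact ⟨y, hxy, fun z hyz => hy ▸ Nat.find_min' hex ⟨z, hxy.trans hyz, rfl⟩⟩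

theorem isConj_of_or_isConj_neWord_prod [Nonempty ι] (x : CoprodI G) :
    (∃ (i : ι) (g : G i), IsConj x (of g)) ∨
      ∃ i j, i ≠ j ∧ ∃ W : NeWord G i j, IsConj x W.prod := by
  obtain ⟨y, hxy, hmin⟩ := exists_isConj_forall_wordLength_le x
  by_cases hy : y = 1
  · exact .inl ⟨Classical.arbitrary ι, 1, by rwa [map_one, ← hy]⟩
  have hword : Word.equiv y ≠ Word.empty := fun h =>
    hy (by rw [← Word.equiv.symm_apply_apply y, h]; exact Word.prod_empty)
  obtain ⟨i, j, W, hW⟩ := NeWord.of_word _ hword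
  obtain rfl : W.prod = y := by rw [NeWord.prod, hW]; exact Word.equiv.symm_apply_apply y
  cases W with
  | singleton g _ => exact .inl ⟨i, g, by rwa [NeWord.prod_singleton] at hxy⟩
  | append w₁ hne w₂ =>
    by_cases hij : i = j
    · subst hij
      have hrot : IsConj (NeWord.append w₁ hne w₂).prod (w₂.prod * w₁.prod) :=
        isConj_iff.mpr ⟨w₁.prod⁻¹, by rw [NeWord.append_prod]; group⟩
      have hle := hmin _ hrot
      rw [NeWord.wordLength_prod, NeWord.toList, List.length_append] at hle
      exact absurd (NeWord.wordLength_prod_mul_prod_lt w₁ w₂) (by omega)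
    · exact .inr ⟨i, j, hij, _, hxy⟩

theorem le_wordLength_of_isConj_neWord_prod {i j : ι} (hij : i ≠ j) (W : NeWord G i j)
    {x a : CoprodI G} {e : ℕ} (hxW : IsConj x W.prod) (hxa : x ^ e = a) :
    e ≤ wordLength a := by
  obtain ⟨c, hc⟩ := isConj_iff.mp hxW
  set C := wordLength c + wordLength c⁻¹
  have key : ∀ N, e * N ≤ C + N * wordLength a := fun N => calc
    e * N ≤ wordLength (W.prod ^ (e * N)) := NeWord.le_wordLength_prod_pow hij W _
    _ = wordLength (c * a ^ N * c⁻¹) := by rw [← hc, conj_pow, ← hxa, pow_mul]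
    _ ≤ wordLength c + wordLength (a ^ N) + wordLength c⁻¹ := by
      grw [wordLength_mul_le, wordLength_mul_le]
    _ ≤ C + N * wordLength a := by
      grw [wordLength_pow_le]
      omega
  by_contra! h
  nlinarith [key (C + 1)]

theorem exists_isConj_of_of_pow_eq [Nonempty ι] {x a : CoprodI G} {e : ℕ} (hxa : x ^ e = a)
    (he : wordLength a < e) : ∃ (i : ι) (g : G i), IsConj x (of g) :=
  (isConj_of_or_isConj_neWord_prod x).resolve_right fun ⟨_, _, hij, W, hxW⟩ =>
    (le_wordLength_of_isConj_neWord_prod hij W hxW hxa).not_gt he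

end WordLength

end Monoid.CoprodI

open Monoid in
/-- if an element `a` of a free product is `p`-divisible (`p` prime) in the
free product, then `a` is conjugate to an element `b` of some factor `G i` such that `b`
is `p`-divisible in `G i`. -/
theorem stmt_12 {ι : Type*} [Nonempty ι] (G : ι → Type*) [∀ i, Group (G i)]
    (p : ℕ) (hp : p.Prime) (a : CoprodI G)
    (ha : ∀ n : ℕ, ∃ x : CoprodI G, x ^ p ^ n = a) :
    ∃ (i : ι) (b : G i) (y : CoprodI G),
      a = y * CoprodI.of b * y⁻¹ ∧ ∀ n : ℕ, ∃ c : G i, c ^ p ^ n = b := by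
  classical
  obtain ⟨n₀, hn₀⟩ : ∃ n₀, CoprodI.wordLength a < p ^ n₀ := ⟨_, Nat.lt_pow_self hp.one_lt⟩
  have conj_root : ∀ n, ∃ (i : ι) (g : G i), IsConj (CoprodI.of ((g ^ p ^ n₀) ^ p ^ n)) a := by
    intro n
    obtain ⟨x, hx⟩ := ha (n₀ + n)
    obtain ⟨i, g, hxg⟩ := CoprodI.exists_isConj_of_of_pow_eq hx
      (hn₀.trans_le (Nat.pow_le_pow_right hp.pos (Nat.le_add_right _ _)))
    refine ⟨i, g, ?_⟩
    rw [← pow_mul, ← pow_add, map_pow, ← hx]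
    exact (hxg.pow _).symm
  obtain ⟨i, g, hga⟩ := conj_root 0
  rw [pow_zero, pow_one] at hga
  obtain ⟨y, rfl⟩ := isConj_iff.mp hga
  refine ⟨i, g ^ p ^ n₀, y, rfl, fun n => ?_⟩
  obtain ⟨j, h, hha⟩ := conj_root n
  -- `j` may differ from `i`; the projection onto `G i` handles both cases at once
  have hproj := (CoprodI.lift (Pi.mulSingle i (MonoidHom.id (G i)))).map_isConj
    (hha.trans hga.symm)
  rw [map_pow, map_pow, CoprodI.of_leftInverse] at hproj
  exact hproj.exists_pow_eq
end
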